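/- Let a : [t₀, ∞) → ℝ be positive and continuous with A(t) := ∫_t^∞ a(s)^{-1} ds < ∞. Suppose g : [t₀, ∞) → ℝ satisfies |g'(t)| ≤ C ( ∫_{t₀}^t a(u)^{n-2} du ) a(t)^{-n} for all t, where a is increasing and n ≥ 2. Then g(t) converges as t → ∞ to some limit g_∞, and |g(t) - g_∞| ≤ C ( ∫_{t₀}^∞ a(u)^{-1} du ) · ∫_t^∞ a(s)^{-1} ds. -/

import Mathlib

open MeasureTheory Set Filter

/-!
Since `a` is increasing, `a u ^ (n - 2) ≤ a t ^ (n - 1) / a u` for `u ≤ t`, so the sharp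
rate `(∫_{t₀}^t a^{n-2}) / a(t)^n` is at most `(∫_{t₀}^∞ a⁻¹) / a(t)`. Hence `g'` is dominated
by an integrable function, `g` converges, and the distance to the limit is bounded by the tail
integral of the dominating function.
-/

section IntegrableDeriv

variable {E : Type*} [NormedAddCommGroup E] [NormedSpace ℝ E] [CompleteSpace E]
  {f f' : ℝ → E} {K : ℝ → ℝ} {t₀ : ℝ}

theorem integrableOn_Ioi_of_hasDerivAt_of_norm_le
    (hderiv : ∀ t ∈ Ioi t₀, HasDerivAt f (f' t) t) (hK : IntegrableOn K (Ioi t₀))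
    (hbound : ∀ t ∈ Ioi t₀, ‖f' t‖ ≤ K t) :
    IntegrableOn f' (Ioi t₀) := by
  have hmeas : AEStronglyMeasurable f' (volume.restrict (Ioi t₀)) :=
    (aestronglyMeasurable_deriv f _).congr <|
      (ae_restrict_iff' measurableSet_Ioi).2 <| .of_forall fun t ht => (hderiv t ht).deriv
  exact hK.mono' hmeas <| (ae_restrict_iff' measurableSet_Ioi).2 <| .of_forall hbound

theorem exists_tendsto_of_hasDerivAt_of_norm_le
    (hderiv : ∀ t ∈ Ici t₀, HasDerivAt f (f' t) t) (hK : IntegrableOn K (Ioi t₀))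
    (hbound : ∀ t ∈ Ioi t₀, ‖f' t‖ ≤ K t) :
    ∃ L : E, Tendsto f atTop (nhds L) ∧ ∀ t ∈ Ici t₀, ‖f t - L‖ ≤ ∫ s in Ioi t, K s := by
  have hf' : IntegrableOn f' (Ioi t₀) :=
    integrableOn_Ioi_of_hasDerivAt_of_norm_le (fun t ht => hderiv t (mem_Ici_of_Ioi ht)) hK
      hbound
  have hlim := tendsto_limUnder_of_hasDerivAt_of_integrableOn_Ioi
    (fun t ht => hderiv t (mem_Ici_of_Ioi ht)) hf'
  refine ⟨_, hlim, fun t ht => ?_⟩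
  have hsub : Ioi t ⊆ Ioi t₀ := Ioi_subset_Ioi ht
  have htail : ∫ s in Ioi t, f' s = limUnder atTop f - f t :=
    integral_Ioi_of_hasDerivAt_of_tendsto' (fun s hs => hderiv s (mem_Ici.2 (ht.trans hs)))
      (hf'.mono_set hsub) hlim
  calc ‖f t - limUnder atTop f‖ = ‖∫ s in Ioi t, f' s‖ := by rw [htail, norm_sub_rev]
    _ ≤ ∫ s in Ioi t, ‖f' s‖ := norm_integral_le_integral_norm _
    _ ≤ ∫ s in Ioi t, K s :=
      setIntegral_mono_on (hf'.mono_set hsub).norm (hK.mono_set hsub) measurableSet_Ioi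
        fun s hs => hbound s (hsub hs)

end IntegrableDeriv

section SharpRate

variable {a : ℝ → ℝ} {t₀ t : ℝ}

theorem integral_pow_le_pow_succ_mul_integral_inv (m : ℕ) (ht : t₀ ≤ t)
    (hapos : ∀ u ∈ Icc t₀ t, 0 < a u) (hamono : MonotoneOn a (Icc t₀ t)) :
    ∫ u in t₀..t, a u ^ m ≤ a t ^ (m + 1) * ∫ u in t₀..t, (a u)⁻¹ := by
  rw [← intervalIntegral.integral_const_mul]
  have hIcc : uIcc t₀ t = Icc t₀ t := uIcc_of_le ht
  refine intervalIntegral.integral_mono_on ht ?_ ?_ fun u hu => ?_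
  · refine MonotoneOn.intervalIntegrable (hIcc ▸ fun u hu v hv huv => ?_)
    exact pow_le_pow_left₀ (hapos u hu).le (hamono hu hv huv) m
  · refine (AntitoneOn.intervalIntegrable (hIcc ▸ fun u hu v hv huv => ?_)).const_mul _
    exact inv_anti₀ (hapos u hu) (hamono hu hv huv)
  · have hau := hapos u hu
    calc a u ^ m = a u ^ (m + 1) * (a u)⁻¹ := by field_simp; ring
      _ ≤ a t ^ (m + 1) * (a u)⁻¹ := by
        gcongr
        exact hamono hu (right_mem_Icc.2 ht) hu.2

theorem sharpRate_le_integral_inv_mul_inv {n : ℕ} (hn : 2 ≤ n) (ht : t₀ ≤ t)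
    (hapos : ∀ u ∈ Ici t₀, 0 < a u) (hamono : MonotoneOn a (Ici t₀))
    (haInt : IntegrableOn (fun s => (a s)⁻¹) (Ici t₀)) :
    (∫ u in t₀..t, a u ^ (n - 2)) / a t ^ n ≤ (∫ u in Ici t₀, (a u)⁻¹) * (a t)⁻¹ := by
  obtain ⟨m, rfl⟩ : ∃ m, n = m + 2 := ⟨n - 2, by omega⟩
  rw [Nat.add_sub_cancel]
  have hat : 0 < a t := hapos t ht
  have hpartial : ∫ u in t₀..t, (a u)⁻¹ ≤ ∫ u in Ici t₀, (a u)⁻¹ := by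
    rw [intervalIntegral.integral_of_le ht]
    exact setIntegral_mono_set haInt
      ((ae_restrict_iff' measurableSet_Ici).2 <| .of_forall fun u hu => (inv_pos.2 (hapos u hu)).le)
      (Ioc_subset_Ioi_self.trans Ioi_subset_Ici_self).eventuallyLE
  calc (∫ u in t₀..t, a u ^ m) / a t ^ (m + 2)
      ≤ a t ^ (m + 1) * (∫ u in t₀..t, (a u)⁻¹) / a t ^ (m + 2) := by
        gcongr
        exact integral_pow_le_pow_succ_mul_integral_inv m ht (fun u hu => hapos u hu.1)
          (hamono.mono Icc_subset_Ici_self)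
    _ = (∫ u in t₀..t, (a u)⁻¹) * (a t)⁻¹ := by field_simp; ring
    _ ≤ (∫ u in Ici t₀, (a u)⁻¹) * (a t)⁻¹ := by gcongr

end SharpRate

theorem stmt_11_general (a g g' : ℝ → ℝ) (t₀ C : ℝ) (n : ℕ) (hn : 2 ≤ n) (hC : 0 ≤ C)
    (hapos : ∀ t ∈ Set.Ici t₀, 0 < a t)
    (hamono : MonotoneOn a (Set.Ici t₀))
    (haInt : MeasureTheory.IntegrableOn (fun s => (a s)⁻¹) (Set.Ici t₀))
    (hderiv : ∀ t ∈ Set.Ici t₀, HasDerivAt g (g' t) t)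
    (hbound : ∀ t ∈ Set.Ici t₀,
      |g' t| ≤ C * (∫ u in t₀..t, a u ^ (n - 2)) / a t ^ n) :
    ∃ g_inf : ℝ, Filter.Tendsto g Filter.atTop (nhds g_inf) ∧
      ∀ t ∈ Set.Ici t₀,
        |g t - g_inf| ≤ C * (∫ u in Set.Ici t₀, (a u)⁻¹) * ∫ s in Set.Ioi t, (a s)⁻¹ := by
  set I := ∫ u in Ici t₀, (a u)⁻¹
  have hdom : ∀ t ∈ Ioi t₀, ‖g' t‖ ≤ C * I * (a t)⁻¹ := fun t ht =>
    calc ‖g' t‖ ≤ C * ((∫ u in t₀..t, a u ^ (n - 2)) / a t ^ n) := by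
          simpa only [Real.norm_eq_abs, mul_div_assoc] using hbound t (mem_Ici_of_Ioi ht)
      _ ≤ C * I * (a t)⁻¹ := by
          rw [mul_assoc]
          exact mul_le_mul_of_nonneg_left
            (sharpRate_le_integral_inv_mul_inv hn ht.le hapos hamono haInt) hC
  obtain ⟨L, hlim, hrate⟩ := exists_tendsto_of_hasDerivAt_of_norm_le hderiv
    ((haInt.mono_set Ioi_subset_Ici_self).const_mul (C * I)) hdom
  refine ⟨L, hlim, fun t ht => ?_⟩
  simpa only [integral_const_mul, Real.norm_eq_abs] using hrate t ht

theorem stmt_11 (a g g' : ℝ → ℝ) (t₀ C : ℝ) (n : ℕ) (hn : 2 ≤ n) (hC : 0 ≤ C)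
    (hapos : ∀ t ∈ Set.Ici t₀, 0 < a t)
    (hacont : ContinuousOn a (Set.Ici t₀))
    (hamono : MonotoneOn a (Set.Ici t₀))
    (haInt : MeasureTheory.IntegrableOn (fun s => (a s)⁻¹) (Set.Ici t₀))
    (hderiv : ∀ t ∈ Set.Ici t₀, HasDerivAt g (g' t) t)
    (hbound : ∀ t ∈ Set.Ici t₀,
      |g' t| ≤ C * (∫ u in t₀..t, a u ^ (n - 2)) / a t ^ n) :
    ∃ g_inf : ℝ, Filter.Tendsto g Filter.atTop (nhds g_inf) ∧
      ∀ t ∈ Set.Ici t₀,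
        |g t - g_inf| ≤ C * (∫ u in Set.Ici t₀, (a u)⁻¹) * ∫ s in Set.Ioi t, (a s)⁻¹ :=
  stmt_11_general a g g' t₀ C n hn hC hapos hamono haInt hderiv hbound
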